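/- Let C be an operator on H similar to a contraction and E a nilpotent operator with EC = 0. Then T = C + E is similar to a contraction. -/

import Mathlib

set_option maxHeartbeats 1000000
set_option synthInstance.maxHeartbeats 400000

open ContinuousLinearMap

/-- An operator is similar to a contraction if some conjugate of it by a bounded invertible
operator has norm at most `1`. -/
def SimilarToContraction {E : Type*} [NormedAddCommGroup E] [NormedSpace ℂ E]
    (S : E →L[ℂ] E) : Prop :=
  ∃ L : E ≃L[ℂ] E, ‖(L.symm : E →L[ℂ] E) ∘L S ∘L (L : E →L[ℂ] E)‖ ≤ 1

open scoped InnerProductSpace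

open Finset in
private lemma key_contr {H : Type*} [NormedAddCommGroup H] [InnerProductSpace ℂ H]
    [CompleteSpace H] (C E : H →L[ℂ] H) (hC : ‖C‖ ≤ 1) (n : ℕ) (hEm : E ^ (n + 1) = 0)
    (hEC : E * C = 0) :
    ∃ L : H ≃L[ℂ] H, ‖(L.symm : H →L[ℂ] H) ∘L (C + E) ∘L (L : H →L[ℂ] H)‖ ≤ 1 := by
  set T := C + E with hT
  -- basic algebraic identities
  have hET1 : ∀ j : ℕ, E ^ (j + 1) * T = E ^ (j + 2) := by
    intro j
    rw [hT, mul_add, pow_succ, mul_assoc, hEC, mul_zero, zero_add]; rw [← pow_succ, ← pow_succ]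
  have hET : ∀ k : ℕ, E * T ^ k = E ^ (k + 1) := by
    intro k
    induction k with
    | zero => simp
    | succ k ih =>
      rw [pow_succ, ← mul_assoc, ih, hET1]
  have hTsucc : ∀ k : ℕ, T ^ (k + 1) = C * T ^ k + E ^ (k + 1) := by
    intro k
    rw [pow_succ']
    nth_rewrite 1 [hT]
    rw [add_mul, hET]
  have hTm : T ^ (n + 1) = C * T ^ n := by
    rw [hTsucc n, hEm, add_zero]
  -- norm bound
  set B : ℝ := 1 + ∑ k ∈ range n, ‖T ^ (k + 1)‖ with hB
  have hB1 : 1 ≤ B := by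
    have : (0:ℝ) ≤ ∑ k ∈ range n, ‖T ^ (k + 1)‖ :=
      Finset.sum_nonneg fun i _ => norm_nonneg _
    simp only [hB]; linarith
  have hTB : ∀ k < n, ∀ x : H, ‖(T ^ (k + 1)) x‖ ≤ B * ‖x‖ := by
    intro k hk x
    refine (le_opNorm _ x).trans (mul_le_mul_of_nonneg_right ?_ (norm_nonneg x))
    have h1 : ‖T ^ (k + 1)‖ ≤ ∑ j ∈ range n, ‖T ^ (j + 1)‖ :=
      Finset.single_le_sum (f := fun j => ‖T ^ (j + 1)‖) (fun i _ => norm_nonneg _)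
        (Finset.mem_range.2 hk)
    simp only [hB]; linarith
  set κ : ℝ := 1 + 2 * (n + 1 : ℝ) * B ^ 2 with hκ
  have hκ0 : (0:ℝ) ≤ κ := by positivity
  -- the quadratic form
  set q : H → ℝ := fun x =>
    (∑ k ∈ range n, (‖(T ^ k) x‖ ^ 2 - ‖C ((T ^ k) x)‖ ^ 2)) + ‖(T ^ n) x‖ ^ 2
      + κ * ∑ j ∈ range n, ‖(E ^ (j + 1)) x‖ ^ 2 with hqdef
  -- the Gram operator
  set S : H →L[ℂ] H :=
    (∑ k ∈ range n, star (T ^ k) * (1 - star C * C) * T ^ k) + star (T ^ n) * T ^ n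
      + (κ : ℂ) • ∑ j ∈ range n, star (E ^ (j + 1)) * E ^ (j + 1) with hS
  have hstar : ∀ (A : H →L[ℂ] H) (u x : H), ⟪(star A) u, x⟫_ℂ = ⟪u, A x⟫_ℂ := by
    intro A u x
    rw [star_eq_adjoint]
    exact adjoint_inner_left A x u
  have hSq : ∀ x : H, RCLike.re ⟪S x, x⟫_ℂ = q x := by
    intro x
    have t1 : ∀ k : ℕ, RCLike.re ⟪(star (T ^ k) * (1 - star C * C) * T ^ k) x, x⟫_ℂ
        = ‖(T ^ k) x‖ ^ 2 - ‖C ((T ^ k) x)‖ ^ 2 := by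
      intro k
      rw [mul_apply_eq_comp, mul_apply_eq_comp, hstar, sub_apply, one_apply_eq_self, mul_apply_eq_comp,
        inner_sub_left, hstar, map_sub]
      rw [inner_self_eq_norm_sq, inner_self_eq_norm_sq]
    have t2 : ∀ (A : H →L[ℂ] H) (y : H), RCLike.re ⟪(star A * A) y, y⟫_ℂ = ‖A y‖ ^ 2 := by
      intro A y
      rw [mul_apply_eq_comp, hstar, inner_self_eq_norm_sq]
    have e0 : ⟪S x, x⟫_ℂ = (∑ k ∈ range n, ⟪(star (T ^ k) * (1 - star C * C) * T ^ k) x, x⟫_ℂ)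
        + ⟪(star (T ^ n) * T ^ n) x, x⟫_ℂ
        + (κ : ℝ) • ∑ j ∈ range n, ⟪(star (E ^ (j + 1)) * E ^ (j + 1)) x, x⟫_ℂ := by
      rw [hS, add_apply, add_apply, smul_apply, inner_add_left, inner_add_left,
        inner_smul_left, Complex.conj_ofReal, ContinuousLinearMap.sum_apply, sum_inner,
        ContinuousLinearMap.sum_apply, sum_inner, Complex.real_smul]
    rw [e0]
    simp only [map_add, map_sum, t1, t2, RCLike.smul_re, hqdef]
  -- the form decreases along T
  have happly : ∀ (k : ℕ) (x : H), (T ^ k) (T x) = (T ^ (k + 1)) x := by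
    intro k x
    rw [pow_succ, mul_apply_eq_comp]
  have hq1 : ∀ x : H, q (T x) ≤ q x := by
    intro x
    set F : ℕ → ℝ := fun k => ‖(T ^ k) x‖ ^ 2 - ‖C ((T ^ k) x)‖ ^ 2 with hF
    set g : ℕ → ℝ := fun j => ‖(E ^ (j + 1)) x‖ ^ 2 with hg
    have hE' : ∀ j : ℕ, (E ^ (j + 1)) (T x) = (E ^ (j + 2)) x := fun j => by
      rw [← mul_apply_eq_comp, hET1]
    have hqT : q (T x) = (∑ k ∈ range n, F (k + 1)) + ‖C ((T ^ n) x)‖ ^ 2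
        + κ * ∑ j ∈ range n, g (j + 1) := by
      simp only [hqdef, hF, hg, happly, hE']
      rw [hTm, mul_apply_eq_comp]
    have hqx : q x = (∑ k ∈ range n, F k) + ‖(T ^ n) x‖ ^ 2 + κ * ∑ j ∈ range n, g j := by
      simp only [hqdef, hF, hg]
    have e1 : ∑ k ∈ range n, (F k - F (k + 1)) = F 0 - F n := Finset.sum_range_sub' F n
    have e2 : ∑ j ∈ range n, (g j - g (j + 1)) = g 0 - g n := Finset.sum_range_sub' g n
    rw [Finset.sum_sub_distrib] at e1 e2
    have hgn : g n = 0 := by simp only [hg]; rw [hEm]; simp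
    have hF0 : F 0 = ‖x‖ ^ 2 - ‖C x‖ ^ 2 := by simp [hF]
    have hFn : F n = ‖(T ^ n) x‖ ^ 2 - ‖C ((T ^ n) x)‖ ^ 2 := by simp only [hF]
    have hCx : ‖C x‖ ^ 2 ≤ ‖x‖ ^ 2 := by
      have h1 : ‖C x‖ ≤ ‖x‖ := by
        calc ‖C x‖ ≤ ‖C‖ * ‖x‖ := le_opNorm _ _
        _ ≤ 1 * ‖x‖ := mul_le_mul_of_nonneg_right hC (norm_nonneg x)
        _ = ‖x‖ := one_mul _
      exact pow_le_pow_left₀ (norm_nonneg _) h1 2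
    have hg0 : 0 ≤ g 0 := by positivity
    have e2' : ∑ j ∈ range n, g (j + 1) = (∑ j ∈ range n, g j) - g 0 := by linarith
    have hκg : 0 ≤ κ * g 0 := mul_nonneg hκ0 hg0
    rw [hqT, hqx, e2', mul_sub]
    linarith
  -- coercivity
  have hq2 : ∀ x : H, ‖x‖ ^ 2 / 2 ≤ q x := by
    intro x
    set r : ℝ := ‖x‖ with hr
    have hden : (0:ℝ) < 2 * ((n : ℝ) + 1) := by positivity
    have hterm : ∀ k ∈ range n,
        (‖(T ^ k) x‖ ^ 2 - ‖(T ^ (k + 1)) x‖ ^ 2) - r ^ 2 / (2 * ((n : ℝ) + 1))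
          ≤ (‖(T ^ k) x‖ ^ 2 - ‖C ((T ^ k) x)‖ ^ 2) + κ * ‖(E ^ (k + 1)) x‖ ^ 2 := by
      intro k hk
      set a : ℝ := ‖(T ^ (k + 1)) x‖ with ha
      set b : ℝ := ‖(E ^ (k + 1)) x‖ with hb
      have ha0 : 0 ≤ a := norm_nonneg _
      have hb0 : 0 ≤ b := norm_nonneg _
      have hr0 : 0 ≤ r := norm_nonneg _
      have h2 : a ≤ B * r := hTB k (Finset.mem_range.1 hk) x
      have hsub : C ((T ^ k) x) = (T ^ (k + 1)) x - (E ^ (k + 1)) x := by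
        have h3 : (T ^ (k + 1)) x = C ((T ^ k) x) + (E ^ (k + 1)) x := by
          rw [hTsucc k, add_apply, mul_apply_eq_comp]
        rw [h3]; abel
      have h1 : ‖C ((T ^ k) x)‖ ≤ a + b := by
        rw [hsub]; exact norm_sub_le _ _
      have h4 : ‖C ((T ^ k) x)‖ ^ 2 ≤ (a + b) ^ 2 :=
        pow_le_pow_left₀ (norm_nonneg _) h1 2
      have h5 : (a + b) ^ 2 ≤ a ^ 2 + r ^ 2 / (2 * ((n : ℝ) + 1)) + κ * b ^ 2 := by
        have key : ((a + b) ^ 2 - a ^ 2 - κ * b ^ 2) * (2 * ((n : ℝ) + 1)) ≤ r ^ 2 := by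
          rw [hκ]
          nlinarith [sq_nonneg (r - 2 * ((n : ℝ) + 1) * B * b),
            mul_nonneg (mul_nonneg (sub_nonneg.2 h2) hb0) hden.le, sq_nonneg b,
            mul_nonneg hb0 hr0]
        linarith [(le_div_iff₀ hden).2 key]
      linarith
    have htel : ∑ k ∈ range n, (‖(T ^ k) x‖ ^ 2 - ‖(T ^ (k + 1)) x‖ ^ 2)
        = r ^ 2 - ‖(T ^ n) x‖ ^ 2 := by
      have := Finset.sum_range_sub' (fun k => ‖(T ^ k) x‖ ^ 2) n
      simpa [hr] using this
    have hsum := Finset.sum_le_sum hterm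
    rw [Finset.sum_sub_distrib, Finset.sum_add_distrib, htel, Finset.sum_const,
      Finset.card_range, nsmul_eq_mul, ← Finset.mul_sum] at hsum
    have hqx : q x = (∑ k ∈ range n, (‖(T ^ k) x‖ ^ 2 - ‖C ((T ^ k) x)‖ ^ 2))
        + ‖(T ^ n) x‖ ^ 2 + κ * ∑ j ∈ range n, ‖(E ^ (j + 1)) x‖ ^ 2 := by
      simp only [hqdef]
    have hnm : (n : ℝ) * (r ^ 2 / (2 * ((n : ℝ) + 1))) ≤ r ^ 2 / 2 := by
      rw [← mul_div_assoc, div_le_div_iff₀ hden (by norm_num : (0:ℝ) < 2)]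
      nlinarith [sq_nonneg r]
    rw [hqx]
    linarith [hsum, hnm]
  -- S is a positive invertible operator
  have hsa : IsSelfAdjoint S := by
    rw [hS]
    refine IsSelfAdjoint.add (IsSelfAdjoint.add ?_ ?_) ?_
    · rw [IsSelfAdjoint, star_sum]
      refine Finset.sum_congr rfl fun k _ => ?_
      exact ((((IsSelfAdjoint.one (R := H →L[ℂ] H))).sub (IsSelfAdjoint.star_mul_self C)).conjugate'
        (T ^ k))
    · exact IsSelfAdjoint.star_mul_self (T ^ n)
    · refine IsSelfAdjoint.smul ?_ ?_
      · exact Complex.conj_ofReal κ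
      · rw [IsSelfAdjoint, star_sum]
        refine Finset.sum_congr rfl fun j _ => ?_
        exact IsSelfAdjoint.star_mul_self (E ^ (j + 1))
  have hS0 : (0 : H →L[ℂ] H) ≤ S := by
    rw [nonneg_iff_isPositive, isPositive_def']
    refine ⟨hsa, fun x => ?_⟩
    have h1 := hq2 x
    have h2 : (0:ℝ) ≤ ‖x‖ ^ 2 / 2 := by positivity
    calc (0:ℝ) ≤ q x := le_trans h2 h1
    _ = RCLike.re ⟪S x, x⟫_ℂ := (hSq x).symm
    _ = S.reApplyInnerSelf x := rfl
  have hSunit : IsUnit S := by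
    refine isUnit_of_forall_le_norm_inner_map S (c := (1/2 : NNReal)) (by norm_num) fun x => ?_
    have h1 : ‖x‖ ^ 2 * ((1/2 : NNReal) : ℝ) = ‖x‖ ^ 2 / 2 := by
      push_cast
      ring
    rw [h1]
    calc ‖x‖ ^ 2 / 2 ≤ q x := hq2 x
    _ = RCLike.re ⟪S x, x⟫_ℂ := (hSq x).symm
    _ ≤ ‖⟪S x, x⟫_ℂ‖ := RCLike.re_le_norm _
  -- square root of S
  set G := CFC.sqrt S with hG
  have hG0 : (0 : H →L[ℂ] H) ≤ G := CFC.sqrt_nonneg S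
  have hGsa : IsSelfAdjoint G := ((nonneg_iff_isPositive G).1 hG0).isSelfAdjoint
  have hGG : G * G = S := CFC.sqrt_mul_sqrt_self S hS0
  obtain ⟨u, hu⟩ := hSunit
  have hcomm : Commute G (↑u : H →L[ℂ] H) := by
    rw [Commute, SemiconjBy, hu, ← hGG, mul_assoc]
  have hcomm' : Commute G (↑u⁻¹ : H →L[ℂ] H) := hcomm.units_inv_right
  set Ginv : H →L[ℂ] H := ↑u⁻¹ * G with hGinv
  have hGinvG : Ginv * G = 1 := by
    rw [hGinv, mul_assoc, hGG, ← hu]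
    exact u.inv_mul
  have hGGinv : G * Ginv = 1 := by
    rw [hGinv, ← mul_assoc, hcomm'.eq, mul_assoc, hGG, ← hu]
    exact u.inv_mul
  have hL1 : ∀ x : H, G (Ginv x) = x := fun x => by rw [← mul_apply_eq_comp, hGGinv, one_apply_eq_self]
  have hL2 : ∀ x : H, Ginv (G x) = x := fun x => by rw [← mul_apply_eq_comp, hGinvG, one_apply_eq_self]
  have hGnorm : ∀ z : H, ‖G z‖ ^ 2 = q z := by
    intro z
    have e1 : ⟪S z, z⟫_ℂ = ⟪G z, G z⟫_ℂ := by
      rw [← hGG, mul_apply_eq_comp, ← hstar G (G z) z, hGsa.star_eq]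
    have e2 : RCLike.re ⟪G z, G z⟫_ℂ = ‖G z‖ ^ 2 := inner_self_eq_norm_sq _
    rw [← e2, ← e1, hSq]
  refine ⟨ContinuousLinearEquiv.equivOfInverse Ginv G hL1 hL2, ?_⟩
  refine opNorm_le_bound _ zero_le_one fun y => ?_
  rw [one_mul]
  have hy : (((ContinuousLinearEquiv.equivOfInverse Ginv G hL1 hL2).symm : H →L[ℂ] H)
      ∘L T ∘L ((ContinuousLinearEquiv.equivOfInverse Ginv G hL1 hL2 : H ≃L[ℂ] H) : H →L[ℂ] H)) y
        = G (T (Ginv y)) := rfl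
  rw [hy]
  have h1 : ‖G (T (Ginv y))‖ ^ 2 = q (T (Ginv y)) := hGnorm _
  have h2 : q (T (Ginv y)) ≤ q (Ginv y) := hq1 _
  have h3 : q (Ginv y) = ‖y‖ ^ 2 := by rw [← hGnorm, hL1]
  nlinarith [norm_nonneg (G (T (Ginv y))), norm_nonneg y]

/-- a zero-product perturbation of an operator similar to a contraction by a
nilpotent operator is similar to a contraction. -/
theorem stmt12 {H : Type*} [NormedAddCommGroup H] [InnerProductSpace ℂ H] [CompleteSpace H]
    (C E : H →L[ℂ] H) (hC : SimilarToContraction C)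
    (hE : ∃ m : ℕ, 1 ≤ m ∧ E ^ m = 0) (hEC : E ∘L C = 0) :
    SimilarToContraction (C + E) := by
  obtain ⟨A, hA⟩ := hC
  obtain ⟨m, hm, hEm⟩ := hE
  obtain ⟨n, rfl⟩ : ∃ n, m = n + 1 := ⟨m - 1, (Nat.succ_pred_eq_of_pos hm).symm⟩
  set a : H →L[ℂ] H := (A : H →L[ℂ] H) with ha
  set b : H →L[ℂ] H := (A.symm : H →L[ℂ] H) with hb
  have hab : a * b = 1 := by ext x; simp [ha, hb, mul_apply]
  have hconj : ∀ X Y : H →L[ℂ] H, (b * X * a) * (b * Y * a) = b * (X * Y) * a := by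
    intro X Y
    calc (b * X * a) * (b * Y * a) = b * X * (a * b) * (Y * a) := by noncomm_ring
    _ = b * (X * Y) * a := by rw [hab, mul_one]; noncomm_ring
  set C₀ : H →L[ℂ] H := b * C * a with hC₀
  set E₀ : H →L[ℂ] H := b * E * a with hE₀
  have hC₀n : ‖C₀‖ ≤ 1 := hA
  have hE₀C₀ : E₀ * C₀ = 0 := by
    rw [hE₀, hC₀, hconj]
    have hEC' : E * C = 0 := hEC
    rw [hEC', mul_zero, zero_mul]
  have hpow : ∀ k : ℕ, E₀ ^ (k + 1) = b * E ^ (k + 1) * a := by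
    intro k
    induction k with
    | zero => rw [pow_one, pow_one]
    | succ k ih =>
      rw [pow_succ, ih, hE₀, hconj, ← pow_succ]
  have hE₀m : E₀ ^ (n + 1) = 0 := by
    rw [hpow n, hEm, mul_zero, zero_mul]
  obtain ⟨L₀, hL₀⟩ := key_contr C₀ E₀ hC₀n n hE₀m hE₀C₀
  refine ⟨L₀.trans A, ?_⟩
  have heq : ((L₀.trans A).symm : H →L[ℂ] H) ∘L (C + E) ∘L ((L₀.trans A : H ≃L[ℂ] H) : H →L[ℂ] H)
      = (L₀.symm : H →L[ℂ] H) ∘L (C₀ + E₀) ∘L (L₀ : H →L[ℂ] H) := by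
    ext x
    simp [hC₀, hE₀, ha, hb, mul_apply]
  rw [heq]
  exact hL₀
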